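/- Let G be a finite group and ρ : G → GL(V) a nontrivial irreducible finite-dimensional complex representation. For nonzero λ, μ ∈ V*, one has L_{V,ρ,λ} = L_{V,ρ,μ} if and only if μ is a scalar multiple of λ. Thus for fixed (V,ρ) the subspaces L_{V,ρ,λ} are parametrized by the projective space of lines in V*. -/
import Mathlib

noncomputable section

variable {G : Type*} [Group G] [Fintype G]
variable {V : Type*} [AddCommGroup V] [Module ℂ V]

/-- The linear map `v ↦ f_v`, where `f_v(g) = λ(ρ(g)v) - λ(v)`. -/
def Fmap (ρ : Representation ℂ G V) (lam : V →ₗ[ℂ] ℂ) : V →ₗ[ℂ] (G → ℂ) :=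
  LinearMap.pi fun g => lam ∘ₗ ρ g - lam

lemma Fmap_apply (ρ : Representation ℂ G V) (lam : V →ₗ[ℂ] ℂ) (v : V) (g : G) :
    Fmap ρ lam v g = lam (ρ g v) - lam v := rfl

lemma W_eq_top (ρ : Representation ℂ G V)
    (hirr : ∀ U : Submodule ℂ V, (∀ g : G, ∀ v ∈ U, ρ g v ∈ U) → U = ⊥ ∨ U = ⊤)
    (hnontriv : ∃ g : G, ρ g ≠ 1) :
    Submodule.span ℂ {x : V | ∃ g v, ρ g v - v = x} = ⊤ := by
  set W := Submodule.span ℂ {x : V | ∃ g v, ρ g v - v = x} with hWdef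
  have hinv : ∀ h : G, ∀ x ∈ W, ρ h x ∈ W := by
    intro h x hx
    induction hx using Submodule.span_induction with
    | mem x hx =>
        obtain ⟨g, v, rfl⟩ := hx
        have key : ρ h (ρ g v - v) = (ρ (h*g) v - v) - (ρ h v - v) := by
          simp [map_mul, Module.End.mul_apply, map_sub]
        rw [key]
        exact W.sub_mem (Submodule.subset_span ⟨h*g, v, rfl⟩)
          (Submodule.subset_span ⟨h, v, rfl⟩)
    | zero => simp
    | add x y _ _ hx hy => simpa using W.add_mem hx hy
    | smul c x _ hx => simpa [map_smul] using W.smul_mem c hx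
  rcases hirr W hinv with hb | ht
  · exfalso
    obtain ⟨g, hg⟩ := hnontriv
    apply hg
    ext v
    have : ρ g v - v ∈ W := Submodule.subset_span ⟨g, v, rfl⟩
    rw [hb, Submodule.mem_bot] at this
    simpa [sub_eq_zero] using this
  · exact ht

lemma Fmap_injective (ρ : Representation ℂ G V)
    (hirr : ∀ U : Submodule ℂ V, (∀ g : G, ∀ v ∈ U, ρ g v ∈ U) → U = ⊥ ∨ U = ⊤)
    (hnontriv : ∃ g : G, ρ g ≠ 1)
    (lam : V →ₗ[ℂ] ℂ) (hlam : lam ≠ 0) :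
    Function.Injective (Fmap ρ lam) := by
  rw [← LinearMap.ker_eq_bot]
  have hinv : ∀ h : G, ∀ v ∈ LinearMap.ker (Fmap ρ lam), ρ h v ∈ LinearMap.ker (Fmap ρ lam) := by
    intro h v hv
    rw [LinearMap.mem_ker] at hv ⊢
    have hv' : ∀ g : G, lam (ρ g v) = lam v := by
      intro g
      have := congrFun hv g
      rw [Fmap_apply] at this
      simpa [sub_eq_zero] using this
    funext g
    rw [Fmap_apply]
    have h1 : ρ g (ρ h v) = ρ (g*h) v := by
      simp [map_mul, Module.End.mul_apply]
    rw [h1, hv' (g*h), hv' h, sub_self]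
    rfl
  rcases hirr _ hinv with hb | ht
  · exact hb
  · exfalso
    apply hlam
    have hW := W_eq_top ρ hirr hnontriv
    have hvan : ∀ g : G, ∀ v : V, lam (ρ g v - v) = 0 := by
      intro g v
      have hv : (v : V) ∈ LinearMap.ker (Fmap ρ lam) := ht ▸ Submodule.mem_top
      rw [LinearMap.mem_ker] at hv
      have := congrFun hv g
      rw [Fmap_apply] at this
      rw [map_sub]
      simpa using this
    have hle : Submodule.span ℂ {x : V | ∃ g v, ρ g v - v = x} ≤ LinearMap.ker lam := by
      rw [Submodule.span_le]
      rintro x ⟨g, v, rfl⟩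
      exact hvan g v
    rw [hW, top_le_iff] at hle
    exact LinearMap.ker_eq_top.mp hle

lemma Fmap_smul (ρ : Representation ℂ G V) (lam : V →ₗ[ℂ] ℂ) (c : ℂ) (v : V) :
    Fmap ρ (c • lam) v = Fmap ρ lam (c • v) := by
  funext g
  simp only [Fmap_apply, LinearMap.smul_apply, map_smul, smul_eq_mul]

theorem stmt6 [FiniteDimensional ℂ V] (ρ : Representation ℂ G V)
    (hirr : ∀ U : Submodule ℂ V, (∀ g : G, ∀ v ∈ U, ρ g v ∈ U) → U = ⊥ ∨ U = ⊤)
    (hnontriv : ∃ g : G, ρ g ≠ 1)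
    (lam mu : V →ₗ[ℂ] ℂ) (hlam : lam ≠ 0) (hmu : mu ≠ 0) :
    LinearMap.range (Fmap ρ lam) = LinearMap.range (Fmap ρ mu) ↔
      ∃ c : ℂ, mu = c • lam := by
  constructor
  · intro hr
    have hinjl := Fmap_injective ρ hirr hnontriv lam hlam
    have hinjm := Fmap_injective ρ hirr hnontriv mu hmu
    -- Build the intertwiner T
    set e1 := LinearEquiv.ofInjective (Fmap ρ lam) hinjl with he1
    set e2 := LinearEquiv.ofInjective (Fmap ρ mu) hinjm with he2
    set T : V ≃ₗ[ℂ] V := e1.trans ((LinearEquiv.ofEq _ _ hr).trans e2.symm) with hT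
    have hkey : ∀ v : V, Fmap ρ mu (T v) = Fmap ρ lam v := by
      intro v
      have : (e2 (T v) : G → ℂ) = Fmap ρ mu (T v) := LinearEquiv.ofInjective_apply _ _
      rw [← this]
      show ((e2 (e2.symm (LinearEquiv.ofEq _ _ hr (e1 v)))) : G → ℂ) = _
      rw [e2.apply_symm_apply]
      show ((e1 v : G → ℂ)) = _
      exact LinearEquiv.ofInjective_apply _ _
    -- T commutes with ρ
    have hcomm : ∀ (h : G) (v : V), T (ρ h v) = ρ h (T v) := by
      intro h v
      apply hinjm
      rw [hkey]
      funext g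
      have h1 : ∀ (nu : V →ₗ[ℂ] ℂ) (w : V), Fmap ρ nu (ρ h w) g
          = Fmap ρ nu w (g * h) - Fmap ρ nu w h := by
        intro nu w
        simp only [Fmap_apply, map_mul, Module.End.mul_apply]
        ring
      rw [h1 lam v, h1 mu (T v), ← hkey v]
    -- nontrivial V
    have hV : Nontrivial V := by
      by_contra hns
      obtain ⟨g, hg⟩ := hnontriv
      apply hg
      have : Subsingleton V := not_nontrivial_iff_subsingleton.mp hns
      ext v
      exact Subsingleton.elim _ _
    -- eigenvalue of T
    obtain ⟨c, hc⟩ := Module.End.exists_eigenvalue (T : V →ₗ[ℂ] V)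
    obtain ⟨w, hw⟩ := hc.exists_hasEigenvector
    -- T = c • id via irreducibility
    set S : V →ₗ[ℂ] V := (T : V →ₗ[ℂ] V) - c • LinearMap.id with hS
    have hSinv : ∀ h : G, ∀ v ∈ LinearMap.ker S, ρ h v ∈ LinearMap.ker S := by
      intro h v hv
      rw [LinearMap.mem_ker] at hv ⊢
      have : S (ρ h v) = ρ h (S v) := by
        simp only [hS, LinearMap.sub_apply, LinearMap.smul_apply, LinearMap.id_apply,
          map_sub, map_smul, LinearEquiv.coe_coe]
        rw [hcomm]
      rw [this, hv, map_zero]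
    have hker : LinearMap.ker S = ⊤ := by
      rcases hirr _ hSinv with hb | ht
      · exfalso
        have hwker : w ∈ LinearMap.ker S := by
          rw [LinearMap.mem_ker]
          simp only [hS, LinearMap.sub_apply, LinearMap.smul_apply, LinearMap.id_apply]
          rw [hw.apply_eq_smul, sub_self]
        rw [hb, Submodule.mem_bot] at hwker
        exact hw.2 hwker
      · exact ht
    have hTc : ∀ v : V, T v = c • v := by
      intro v
      have : v ∈ LinearMap.ker S := hker ▸ Submodule.mem_top
      rw [LinearMap.mem_ker] at this
      have := sub_eq_zero.mp this
      simpa [hS, sub_eq_zero] using this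
    -- lam = c • mu
    have hlcm : lam = c • mu := by
      have hvan : ∀ g : G, ∀ v : V, (lam - c • mu) (ρ g v - v) = 0 := by
        intro g v
        have := congrFun (hkey v) g
        rw [hTc v, Fmap_apply, Fmap_apply, map_smul, map_smul] at this
        simp only [LinearMap.sub_apply, LinearMap.smul_apply, map_sub, smul_eq_mul]
        have : c * mu (ρ g v) - c * mu v = lam (ρ g v) - lam v := by
          simpa [smul_eq_mul] using this
        linear_combination -this
      have hW := W_eq_top ρ hirr hnontriv
      have hle : Submodule.span ℂ {x : V | ∃ g v, ρ g v - v = x}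
          ≤ LinearMap.ker (lam - c • mu) := by
        rw [Submodule.span_le]
        rintro x ⟨g, v, rfl⟩
        exact hvan g v
      rw [hW, top_le_iff] at hle
      have := LinearMap.ker_eq_top.mp hle
      rw [sub_eq_zero] at this
      exact this
    have hc0 : c ≠ 0 := by
      rintro rfl
      simp at hlcm
      exact hlam hlcm
    exact ⟨c⁻¹, by rw [hlcm, smul_smul, inv_mul_cancel₀ hc0, one_smul]⟩
  · rintro ⟨c, rfl⟩
    have hc0 : c ≠ 0 := by
      rintro rfl
      simp at hmu
    ext f
    simp only [LinearMap.mem_range]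
    constructor
    · rintro ⟨v, rfl⟩
      exact ⟨c⁻¹ • v, by rw [Fmap_smul, smul_smul, mul_inv_cancel₀ hc0, one_smul]⟩
    · rintro ⟨v, rfl⟩
      exact ⟨c • v, by rw [← Fmap_smul]⟩

end
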